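/- arXiv:1904.02521 — 2 statements merged into one kernel-verified Lean document; each statement's English description precedes it below -/
import Mathlib

section
/- Let p be an odd prime, and let r, t be non-negative integers with r ≥ t, r - t even, and t_0 = p - 1 (where n_i denotes the i-th base-p digit of n). If (N, σ, δ, I) is an admissible quadruple for the pair (r, t) with N ≥ 1, then σ_0 = 0, 0 ∉ I, and 2δ_0 ≡ r + 1 (mod p); explicitly, δ_0 = 0 if r_0 = p - 1, δ_0 = (r_0 + 1)/2 if r_0 is odd, and δ_0 = (p + 1 + r_0)/2 if r_0 is even with r_0 ≠ p - 1. -/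
/-- The `i`-th digit of the base-`p` expansion of `n`. -/
def digit (p n i : ℕ) : ℕ := n / p ^ i % p

/-- `σ_I = ∑_{i ∈ I} p^i σ_i`. -/
def digitSum (p σ : ℕ) (I : Finset ℕ) : ℕ := ∑ i ∈ I, p ^ i * digit p σ i

/-- An admissible triple `(N, σ, δ)`. -/
def AdmissibleTriple (p N σ δ : ℕ) : Prop :=
  σ < p ^ (N + 1) - p ^ N ∧ δ < p ^ (N + 1) - p ^ N ∧
  (∀ i < N, digit p σ i + digit p δ i ≤ p - 1) ∧
  digit p σ N + digit p δ N < p - 1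

/-- An admissible quadruple `(N, σ, δ, I)`. -/
def AdmissibleQuadruple (p N σ δ : ℕ) (I : Finset ℕ) : Prop :=
  AdmissibleTriple p N σ δ ∧ ∀ i ∈ I, digit p σ i ≠ 0 ∧ i ≠ N

/-- An admissible quadruple for the pair `(r, t)`. -/
def AdmissibleQuadrupleFor (p r t N σ δ : ℕ) (I : Finset ℕ) : Prop :=
  AdmissibleQuadruple p N σ δ I ∧
  t + 2 * digitSum p σ I = p ^ N - 1 + σ ∧
  r ≡ p ^ N - 1 + σ + 2 * δ [MOD 2 * p ^ (N + 1)]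

/-!
Reduce everything modulo `p`. Since `N ≥ 1`, `p ^ N - 1 ≡ -1`, and `t ≡ -1` because `t₀ = p - 1`;
only the `i = 0` term of `σ_I` survives. The first admissibility equation thus becomes
`2 σ_I ≡ σ ≡ σ₀`. If `0 ∈ I` this says `2 σ₀ ≡ σ₀`, forcing `σ₀ = 0`, which `0 ∈ I` forbids; so
`0 ∉ I` and `σ₀ ≡ 0`. The second equation then reads `r ≡ -1 + 2 δ₀`. Finally `2 δ₀ < 2p` and
`r₀ + 1 ≤ p` leave only three ways for `2 δ₀` and `r₀ + 1` to be congruent, sorted out by parity.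
-/

section DigitsModP

variable {p : ℕ}

theorem digit_lt (hp : 0 < p) (n i : ℕ) : digit p n i < p :=
  Nat.mod_lt _ hp

theorem digit_zero_modEq (p n : ℕ) : digit p n 0 ≡ n [MOD p] := by
  simpa [digit] using Nat.mod_modEq n p

theorem digit_zero_eq_val (p n : ℕ) : digit p n 0 = (n : ZMod p).val := by
  simp [digit, ZMod.val_natCast]

theorem natCast_digit_zero (p n : ℕ) : ((digit p n 0 : ℕ) : ZMod p) = n := by
  simp [digit, ZMod.natCast_mod]

theorem natCast_digitSum (p σ : ℕ) (I : Finset ℕ) :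
    ((digitSum p σ I : ℕ) : ZMod p) = if 0 ∈ I then (σ : ZMod p) else 0 := by
  have hterm : ∀ i ∈ I, ((p ^ i * digit p σ i : ℕ) : ZMod p) =
      if i = 0 then (σ : ZMod p) else 0 := by
    intro i _
    rcases eq_or_ne i 0 with rfl | hi
    · simp [natCast_digit_zero]
    · simp [hi, zero_pow hi]
  rw [digitSum, Nat.cast_sum, Finset.sum_congr rfl hterm, Finset.sum_ite_eq' I 0]

theorem natCast_pow_sub_one (hp : 0 < p) {N : ℕ} (hN : 1 ≤ N) :
    ((p ^ N - 1 : ℕ) : ZMod p) = -1 := by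
  rw [Nat.cast_sub (Nat.one_le_pow _ _ hp), Nat.cast_pow, ZMod.natCast_self,
    zero_pow (by omega)]
  simp

theorem natCast_eq_neg_one_of_digit_zero (hp : 0 < p) {t : ℕ} (ht : digit p t 0 = p - 1) :
    (t : ZMod p) = -1 := by
  rw [← natCast_digit_zero, ht, Nat.cast_sub hp, ZMod.natCast_self]
  simp

theorem two_mul_cases_of_modEq_add_one {d a : ℕ} (hd : d < p) (ha : a < p) (h : 2 * d ≡ a + 1 [MOD p]) :
    2 * d + p = a + 1 ∨ 2 * d = a + 1 ∨ 2 * d = a + 1 + p := by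
  have hshift : a + 1 ≡ 2 * d + p [MOD p] :=
    h.symm.trans (Nat.modEq_iff_dvd' (Nat.le_add_right _ _) |>.mpr (by simp))
  obtain ⟨c, hc⟩ := (Nat.modEq_iff_dvd' (by omega)).mp hshift
  have hc3 : c < 3 := lt_of_mul_lt_mul_left (a := p) (by rw [← hc]; omega) (Nat.zero_le p)
  interval_cases c <;> omega

end DigitsModP

namespace AdmissibleQuadrupleFor

variable {p r t N σ δ : ℕ} {I : Finset ℕ}

theorem two_mul_ite_eq_natCast_sigma (hp : 0 < p) (ht : digit p t 0 = p - 1)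
    (h : AdmissibleQuadrupleFor p r t N σ δ I) (hN : 1 ≤ N) :
    2 * (if 0 ∈ I then (σ : ZMod p) else 0) = σ := by
  have heq := congrArg (fun n : ℕ => (n : ZMod p)) h.2.1
  simp only [Nat.cast_add, Nat.cast_mul, natCast_digitSum, natCast_pow_sub_one hp hN,
    natCast_eq_neg_one_of_digit_zero hp ht, Nat.cast_ofNat] at heq
  linear_combination heq

theorem zero_notMem (hp : 0 < p) (ht : digit p t 0 = p - 1)
    (h : AdmissibleQuadrupleFor p r t N σ δ I) (hN : 1 ≤ N) : 0 ∉ I := by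
  intro h0
  have h2σ := h.two_mul_ite_eq_natCast_sigma hp ht hN
  rw [if_pos h0] at h2σ
  have hσ : (σ : ZMod p) = 0 := by linear_combination h2σ
  exact (h.1.2 0 h0).1 (by rw [digit_zero_eq_val, hσ, ZMod.val_zero])

theorem natCast_sigma_eq_zero (hp : 0 < p) (ht : digit p t 0 = p - 1)
    (h : AdmissibleQuadrupleFor p r t N σ δ I) (hN : 1 ≤ N) : (σ : ZMod p) = 0 := by
  simpa [h.zero_notMem hp ht hN] using (h.two_mul_ite_eq_natCast_sigma hp ht hN).symm

theorem digit_sigma_zero (hp : 0 < p) (ht : digit p t 0 = p - 1)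
    (h : AdmissibleQuadrupleFor p r t N σ δ I) (hN : 1 ≤ N) : digit p σ 0 = 0 := by
  rw [digit_zero_eq_val, h.natCast_sigma_eq_zero hp ht hN, ZMod.val_zero]

theorem two_mul_digit_delta_modEq (hp : 0 < p) (ht : digit p t 0 = p - 1)
    (h : AdmissibleQuadrupleFor p r t N σ δ I) (hN : 1 ≤ N) :
    2 * digit p δ 0 ≡ r + 1 [MOD p] := by
  have hr : r ≡ p ^ N - 1 + σ + 2 * δ [MOD p] :=
    h.2.2.of_dvd ⟨2 * p ^ N, by ring⟩
  have hrc := (ZMod.natCast_eq_natCast_iff _ _ _).mpr hr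
  simp only [Nat.cast_add, Nat.cast_mul, natCast_pow_sub_one hp hN, Nat.cast_ofNat,
    h.natCast_sigma_eq_zero hp ht hN] at hrc
  rw [← ZMod.natCast_eq_natCast_iff]
  push_cast
  rw [natCast_digit_zero]
  linear_combination -hrc

end AdmissibleQuadrupleFor

theorem stmt_12_general (p : ℕ) (hodd : Odd p) (r t : ℕ)
    (ht0 : digit p t 0 = p - 1)
    (N σ δ : ℕ) (I : Finset ℕ)
    (h : AdmissibleQuadrupleFor p r t N σ δ I) (hN : 1 ≤ N) :
    digit p σ 0 = 0 ∧ 0 ∉ I ∧ 2 * digit p δ 0 ≡ r + 1 [MOD p] ∧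
    (digit p r 0 = p - 1 → digit p δ 0 = 0) ∧
    (Odd (digit p r 0) → 2 * digit p δ 0 = digit p r 0 + 1) ∧
    (Even (digit p r 0) → digit p r 0 ≠ p - 1 →
      2 * digit p δ 0 = p + 1 + digit p r 0) := by
  have hp := hodd.pos
  have hδ := h.two_mul_digit_delta_modEq hp ht0 hN
  have hδlt := digit_lt hp δ 0
  have hrlt := digit_lt hp r 0
  have hcases := two_mul_cases_of_modEq_add_one hδlt hrlt
    (hδ.trans ((digit_zero_modEq p r).symm.add_right 1))
  refine ⟨h.digit_sigma_zero hp ht0 hN, h.zero_notMem hp ht0 hN, hδ, ?_, ?_, ?_⟩ <;> obtain ⟨m, hm⟩ := hodd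
  · intro
    omega
  · rintro ⟨k, hk⟩
    omega
  · rintro ⟨k, hk⟩ _
    omega

theorem stmt_12 (p : ℕ) (hp : p.Prime) (hodd : Odd p) (r t : ℕ) (hrt : t ≤ r)
    (hev : Even (r - t)) (ht0 : digit p t 0 = p - 1)
    (N σ δ : ℕ) (I : Finset ℕ)
    (h : AdmissibleQuadrupleFor p r t N σ δ I) (hN : 1 ≤ N) :
    digit p σ 0 = 0 ∧ 0 ∉ I ∧ 2 * digit p δ 0 ≡ r + 1 [MOD p] ∧
    (digit p r 0 = p - 1 → digit p δ 0 = 0) ∧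
    (Odd (digit p r 0) → 2 * digit p δ 0 = digit p r 0 + 1) ∧
    (Even (digit p r 0) → digit p r 0 ≠ p - 1 →
      2 * digit p δ 0 = p + 1 + digit p r 0) :=
  stmt_12_general p hodd r t ht0 N σ δ I h hN
end

section
/- Let p be an odd prime, and let r, t be non-negative integers with r ≥ t and r - t even such that r_0 ≠ p - 1, t_0 ≠ p - 1, r_0 and t_0 have different parities, and r_0 + t_0 ≥ p - 2 (where n_i denotes the i-th base-p digit of n). If (N, σ, δ, I) is an admissible quadruple for the pair (r, t) with N ≥ 1, then 0 ∈ I, σ_0 = p - 1 - t_0, and δ_0 = (r_0 + t_0 + 2 - p)/2. -/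
/-!
Since `N ≥ 1`, reducing the two defining relations of the quadruple modulo `p` leaves
congruences between the last digits `r₀, t₀, σ₀, δ₀`:
`t₀ + 2 [0 ∈ I] σ₀ ≡ σ₀ - 1` and `r₀ ≡ σ₀ - 1 + 2 δ₀`. All quantities are digits and
`σ₀ + δ₀ ≤ p - 1`, so each congruence leaves at most three candidate equalities. If `0 ∉ I`
then `σ₀ = t₀ + 1` and `r₀ ≡ t₀ + 2 δ₀`, which is ruled out by the parities of `r₀, t₀` and by
`r₀ + t₀ ≥ p - 2`. If `0 ∈ I` then `σ₀ = p - 1 - t₀` and `2 δ₀ ≡ r₀ + t₀ + 2`; as `p` and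
`r₀ + t₀` are odd, parity forces `2 δ₀ = r₀ + t₀ + 2 - p`.
-/

theorem Nat.ModEq.exists_eq_add_mul_of_lt_mul {n a b c : ℕ} (h : a ≡ b [MOD n])
    (ha : a < c * n) (hb : b < c * n) : ∃ k < c, a = b + k * n ∨ b = a + k * n := by
  rcases le_total b a with hba | hab
  · obtain ⟨k, hk⟩ := (Nat.modEq_iff_dvd' hba).mp h.symm
    rw [mul_comm] at hk
    exact ⟨k, Nat.lt_of_mul_lt_mul_right (by rw [← hk]; omega), .inl (by omega)⟩
  · obtain ⟨k, hk⟩ := (Nat.modEq_iff_dvd' hab).mp h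
    rw [mul_comm] at hk
    exact ⟨k, Nat.lt_of_mul_lt_mul_right (by rw [← hk]; omega), .inr (by omega)⟩

theorem Nat.pow_sub_one_modEq_sub_one {p N : ℕ} (hp : 0 < p) (hN : N ≠ 0) :
    p ^ N - 1 ≡ p - 1 [MOD p] := by
  have hpN : p ≤ p ^ N := Nat.le_self_pow hN p
  refine ((Nat.modEq_iff_dvd' (by omega)).mpr ?_).symm
  rw [Nat.sub_sub_sub_cancel_right hp]
  exact Nat.dvd_sub (dvd_pow_self p hN) dvd_rfl

@[simp]
theorem digit_zero (p n : ℕ) : digit p n 0 = n % p := by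
  simp [digit]

theorem digitSum_modEq (p σ : ℕ) (I : Finset ℕ) :
    digitSum p σ I ≡ if 0 ∈ I then σ % p else 0 [MOD p] := by
  calc digitSum p σ I ≡ ∑ i ∈ I, if 0 = i then σ % p else 0 [MOD p] := by
        refine Nat.ModEq.sum fun i _ => ?_
        split_ifs with hi
        · simp only [← hi, pow_zero, one_mul, digit_zero]; rfl
        · exact Nat.modEq_zero_iff_dvd.mpr (dvd_mul_of_dvd_left (dvd_pow_self p (Ne.symm hi)) _)
    _ = if 0 ∈ I then σ % p else 0 := Finset.sum_ite_eq I 0 _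

section Residues

variable {p r₀ t₀ s d : ℕ}

theorem eq_succ_of_modEq_sub_one_add (ht₀ : t₀ < p - 1) (hs : s < p)
    (h : t₀ ≡ p - 1 + s [MOD p]) : s = t₀ + 1 := by
  obtain ⟨k, hk, h | h⟩ := h.exists_eq_add_mul_of_lt_mul (c := 2) (by omega) (by omega) <;>
    interval_cases k <;> omega

theorem eq_sub_one_sub_of_modEq_sub_one_add (ht₀ : t₀ < p) (hs : s < p)
    (h : t₀ + 2 * s ≡ p - 1 + s [MOD p]) : s = p - 1 - t₀ := by
  obtain ⟨k, hk, h | h⟩ := h.exists_eq_add_mul_of_lt_mul (c := 3) (by omega) (by omega) <;>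
    interval_cases k <;> omega

theorem two_mul_add_eq_of_modEq (hp : p % 2 = 1) (hr₀ : r₀ < p - 1) (ht₀ : t₀ < p)
    (hpar : r₀ % 2 ≠ t₀ % 2) (hs : s = p - 1 - t₀) (hsd : s + d ≤ p - 1)
    (h : r₀ ≡ p - 1 + s + 2 * d [MOD p]) : 2 * d + p = r₀ + t₀ + 2 := by
  obtain ⟨k, hk, h | h⟩ := h.exists_eq_add_mul_of_lt_mul (c := 3) (by omega) (by omega) <;>
    interval_cases k <;> omega

theorem not_modEq_of_eq_succ (hp : p % 2 = 1) (hr₀ : r₀ < p) (hpar : r₀ % 2 ≠ t₀ % 2)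
    (hsum : p - 2 ≤ r₀ + t₀) (hs : s = t₀ + 1) (hsd : s + d ≤ p - 1) :
    ¬ r₀ ≡ p - 1 + s + 2 * d [MOD p] := fun h => by
  obtain ⟨k, hk, h | h⟩ := h.exists_eq_add_mul_of_lt_mul (c := 3) (by omega) (by omega) <;>
    interval_cases k <;> omega

end Residues

theorem stmt_16_general (p : ℕ) (hodd : Odd p) (r t : ℕ)
    (hr0 : digit p r 0 ≠ p - 1) (ht0 : digit p t 0 ≠ p - 1)
    (hpar : digit p r 0 % 2 ≠ digit p t 0 % 2)
    (hsum : p - 2 ≤ digit p r 0 + digit p t 0)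
    (N σ δ : ℕ) (I : Finset ℕ)
    (h : AdmissibleQuadrupleFor p r t N σ δ I) (hN : 1 ≤ N) :
    0 ∈ I ∧ digit p σ 0 = p - 1 - digit p t 0 ∧
      2 * digit p δ 0 + p = digit p r 0 + digit p t 0 + 2 := by
  obtain ⟨⟨⟨-, -, hdig, -⟩, -⟩, ht, hr⟩ := h
  have hp2 : p % 2 = 1 := Nat.odd_iff.mp hodd
  have hp0 : 0 < p := by omega
  have hpN := (Nat.pow_sub_one_modEq_sub_one hp0 (N := N) (by omega)).add (Nat.mod_modEq σ p).symm
  have hσ : t % p + 2 * (if 0 ∈ I then σ % p else 0) ≡ p - 1 + σ % p [MOD p] :=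
    ((Nat.mod_modEq t p).add ((digitSum_modEq p σ I).symm.mul_left 2)).trans (ht ▸ hpN)
  have hρ : r % p ≡ p - 1 + σ % p + 2 * (δ % p) [MOD p] :=
    (Nat.mod_modEq r p).trans <|
      (hr.of_dvd (dvd_mul_of_dvd_right (dvd_pow_self p (by omega)) 2)).trans
        (hpN.add ((Nat.mod_modEq δ p).symm.mul_left 2))
  have hsd := hdig 0 hN
  simp only [digit_zero] at hr0 ht0 hpar hsum hsd ⊢
  have hr_lt := Nat.mod_lt r hp0
  have ht_lt := Nat.mod_lt t hp0
  have hs_lt := Nat.mod_lt σ hp0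
  by_cases h0 : 0 ∈ I
  · simp only [h0, if_true] at hσ
    have hs := eq_sub_one_sub_of_modEq_sub_one_add ht_lt hs_lt hσ
    exact ⟨h0, hs, two_mul_add_eq_of_modEq hp2 (by omega) ht_lt hpar hs hsd hρ⟩
  · simp only [h0, if_false, mul_zero, add_zero] at hσ
    have hs := eq_succ_of_modEq_sub_one_add (by omega) hs_lt hσ
    exact (not_modEq_of_eq_succ hp2 hr_lt hpar hsum hs hsd hρ).elim

theorem stmt_16 (p : ℕ) (hp : p.Prime) (hodd : Odd p) (r t : ℕ) (hrt : t ≤ r)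
    (hev : Even (r - t)) (hr0 : digit p r 0 ≠ p - 1) (ht0 : digit p t 0 ≠ p - 1)
    (hpar : digit p r 0 % 2 ≠ digit p t 0 % 2)
    (hsum : p - 2 ≤ digit p r 0 + digit p t 0)
    (N σ δ : ℕ) (I : Finset ℕ)
    (h : AdmissibleQuadrupleFor p r t N σ δ I) (hN : 1 ≤ N) :
    0 ∈ I ∧ digit p σ 0 = p - 1 - digit p t 0 ∧
      2 * digit p δ 0 + p = digit p r 0 + digit p t 0 + 2 :=
  stmt_16_general p hodd r t hr0 ht0 hpar hsum N σ δ I h hN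
end
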